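/- arXiv:2310.10835 — 2 statements merged into one kernel-verified Lean document; each statement's English description precedes it below -/
import Mathlib

section
/- Let n ≥ 1, let f : ℝⁿ → ℝ be twice continuously differentiable with ∇f Lipschitz with constant L_f > 0, let Z = ∫ e^{−f(x)} dx ∈ (0, ∞) and π(x) = e^{−f(x)}/Z. Let ν : ℝⁿ → ℝ be an everywhere positive, continuously differentiable probability density and let F : ℝⁿ → ℝⁿ be measurable. Assume the integrals ∫ ‖∇f(x)‖² ν(x) dx, ∫ ‖∇log ν(x)‖² ν(x) dx, and ∫ ‖F(x) − ∇f(x)‖² ν(x) dx are finite, and assume the divergence-theorem identity ∫_{ℝⁿ} div(∇f(x) ν(x)) dx = 0 holds. Then ∫_{ℝⁿ} ‖F(x)‖² ν(x) dx ≤ 2 FI(ν‖π) + 4 n L_f + 2 ∫_{ℝⁿ} ‖F(x) − ∇f(x)‖² ν(x) dx. -/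
/-!
Expanding the square in the Fisher information relative to `π ∝ e^{-f}` gives
`FI(ν‖π) = ∫ ‖∇log ν‖² ν + 2 ∫ ⟪∇ν, ∇f⟫ + ∫ ‖∇f‖² ν`.
The divergence identity `∫ div(ν ∇f) = 0` turns the cross term into `-∫ ν Δf`,
and `Δf ≤ n L_f` because `∇f` is `L_f`-Lipschitz; hence `∫ ‖∇f‖² ν ≤ FI(ν‖π) + 2 n L_f`.
The bound on `∫ ‖F‖² ν` follows from `‖F‖² ≤ 2 ‖F - ∇f‖² + 2 ‖∇f‖²`.
-/

open MeasureTheory Real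

/-- Divergence of a vector field on `ℝⁿ`: `div V = ∑ i, ∂Vᵢ/∂xᵢ`. -/
noncomputable def diverg {n : ℕ}
    (V : EuclideanSpace ℝ (Fin n) → EuclideanSpace ℝ (Fin n))
    (x : EuclideanSpace ℝ (Fin n)) : ℝ :=
  ∑ i, fderiv ℝ V x (EuclideanSpace.single i (1 : ℝ)) i

/-- Relative Fisher information
`FI(ν‖π) = ∫ ‖∇log ν(x) − ∇log π(x)‖² ν(x) dx`. -/
noncomputable def fisherInfo {n : ℕ}
    (ν piD : EuclideanSpace ℝ (Fin n) → ℝ) : ℝ :=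
  ∫ x, ‖gradient (fun y => Real.log (ν y)) x
        - gradient (fun y => Real.log (piD y)) x‖ ^ 2 * ν x

open InnerProductSpace
open scoped RealInnerProductSpace

section Integral

variable {α : Type*} [MeasurableSpace α] {μ : Measure α}

theorem MeasureTheory.Integrable.inner_mul_of_norm_sq_mul {E : Type*} [NormedAddCommGroup E]
    [InnerProductSpace ℝ E] {u v : α → E} {w : α → ℝ} (hw : ∀ x, 0 ≤ w x)
    (hm : AEStronglyMeasurable (fun x => ⟪u x, v x⟫ * w x) μ)
    (hu : Integrable (fun x => ‖u x‖ ^ 2 * w x) μ)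
    (hv : Integrable (fun x => ‖v x‖ ^ 2 * w x) μ) :
    Integrable (fun x => ⟪u x, v x⟫ * w x) μ := by
  refine ((hu.fun_add hv).const_mul (1 / 2)).mono' hm (ae_of_all _ fun x => ?_)
  have hamgm : |⟪u x, v x⟫| ≤ 1 / 2 * (‖u x‖ ^ 2 + ‖v x‖ ^ 2) := by
    linarith [abs_real_inner_le_norm (u x) (v x), two_mul_le_add_sq ‖u x‖ ‖v x‖]
  rw [norm_mul, Real.norm_eq_abs, Real.norm_of_nonneg (hw x)]
  calc |⟪u x, v x⟫| * w x ≤ 1 / 2 * (‖u x‖ ^ 2 + ‖v x‖ ^ 2) * w x := by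
        gcongr; exact hw x
    _ = _ := by ring

theorem integral_norm_sq_mul_le {E : Type*} [SeminormedAddCommGroup E] {F G : α → E}
    {w : α → ℝ} (hw : ∀ x, 0 ≤ w x) (hFG : Integrable (fun x => ‖F x - G x‖ ^ 2 * w x) μ)
    (hG : Integrable (fun x => ‖G x‖ ^ 2 * w x) μ) :
    ∫ x, ‖F x‖ ^ 2 * w x ∂μ
      ≤ 2 * (∫ x, ‖F x - G x‖ ^ 2 * w x ∂μ) + 2 * ∫ x, ‖G x‖ ^ 2 * w x ∂μ := by
  rw [← integral_const_mul, ← integral_const_mul,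
    ← integral_add (hFG.const_mul 2) (hG.const_mul 2)]
  refine integral_mono_of_nonneg (ae_of_all _ fun x => mul_nonneg (sq_nonneg _) (hw x))
    ((hFG.const_mul 2).fun_add (hG.const_mul 2)) (ae_of_all _ fun x => ?_)
  calc ‖F x‖ ^ 2 * w x ≤ (‖F x - G x‖ + ‖G x‖) ^ 2 * w x := by
        gcongr
        · exact hw x
        · exact norm_le_norm_sub_add (F x) (G x)
    _ ≤ 2 * (‖F x - G x‖ ^ 2 + ‖G x‖ ^ 2) * w x := by gcongr; exacts [hw x, add_sq_le]
    _ = _ := by ring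

theorem integral_mul_le_of_integral_eq_one {ν g : α → ℝ} {C : ℝ} (hν : ∀ x, 0 ≤ ν x)
    (hνprob : ∫ x, ν x ∂μ = 1) (hνg : Integrable (fun x => ν x * g x) μ)
    (hg : ∀ x, g x ≤ C) :
    ∫ x, ν x * g x ∂μ ≤ C :=
  calc ∫ x, ν x * g x ∂μ ≤ ∫ x, C * ν x ∂μ :=
        integral_mono hνg ((Integrable.of_integral_ne_zero (by simp [hνprob])).const_mul C)
          fun x => by rw [mul_comm C]; exact mul_le_mul_of_nonneg_left (hg x) (hν x)
    _ = C := by rw [integral_const_mul, hνprob, mul_one]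

end Integral

section Gradient

variable {E : Type*} [NormedAddCommGroup E] [InnerProductSpace ℝ E] [CompleteSpace E]

theorem ContDiff.gradient {f : E → ℝ} {k : WithTop ℕ∞} (hf : ContDiff ℝ (k + 1) f) :
    ContDiff ℝ k (gradient f) :=
  (toDual ℝ E).symm.contDiff.comp (hf.fderiv_right le_rfl)

theorem measurable_gradient [MeasurableSpace E] [BorelSpace E] (f : E → ℝ) :
    Measurable (gradient f) :=
  (toDual ℝ E).symm.continuous.measurable.comp (measurable_fderiv ℝ f)

theorem hasGradientAt_log {ν : E → ℝ} {x : E} (hν : DifferentiableAt ℝ ν x) (hx : ν x ≠ 0) :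
    HasGradientAt (fun y => log (ν y)) ((ν x)⁻¹ • gradient ν x) x := by
  rw [hasGradientAt_iff_hasFDerivAt, map_smul, toDual_gradient]
  exact hν.hasFDerivAt.log hx

theorem inner_gradient_log_mul_self {ν : E → ℝ} {x : E} (hν : DifferentiableAt ℝ ν x)
    (hx : ν x ≠ 0) (v : E) :
    ⟪gradient (fun y => log (ν y)) x, v⟫ * ν x = ⟪gradient ν x, v⟫ := by
  rw [(hasGradientAt_log hν hx).gradient, real_inner_smul_left, mul_comm, ← mul_assoc,
    mul_inv_cancel₀ hx, one_mul]

theorem gradient_log_exp_neg_div (f : E → ℝ) {Z : ℝ} (hZ : Z ≠ 0) :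
    gradient (fun y => log (exp (-f y) / Z)) = -gradient f := by
  have hlog : (fun y => log (exp (-f y) / Z)) = fun y => -f y - log Z := by
    funext y
    rw [log_div (exp_ne_zero _) hZ, log_exp]
  ext1 x
  rw [hlog, gradient, fderiv_sub_const, fderiv_fun_neg, map_neg]
  rfl

theorem MeasureTheory.Integrable.inner_gradient_of_norm_sq_mul [MeasurableSpace E] [BorelSpace E]
    [SecondCountableTopology E] {μ : Measure E} {ν : E → ℝ} {V : E → E}
    (hν : Differentiable ℝ ν) (hpos : ∀ x, 0 < ν x) (hV : Measurable V)
    (hlog : Integrable (fun x => ‖gradient (fun y => log (ν y)) x‖ ^ 2 * ν x) μ)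
    (hVν : Integrable (fun x => ‖V x‖ ^ 2 * ν x) μ) :
    Integrable (fun x => ⟪gradient ν x, V x⟫) μ := by
  have hmeas : AEStronglyMeasurable
      (fun x => ⟪gradient (fun y => log (ν y)) x, V x⟫ * ν x) μ :=
    (((measurable_gradient _).inner hV).mul hν.continuous.measurable).aestronglyMeasurable
  exact (Integrable.inner_mul_of_norm_sq_mul (fun x => (hpos x).le) hmeas hlog hVν).congr
    (ae_of_all _ fun x => inner_gradient_log_mul_self (hν x) (hpos x).ne' _)

end Gradient

section Divergence

variable {n : ℕ}

theorem diverg_smul {ν : EuclideanSpace ℝ (Fin n) → ℝ}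
    {V : EuclideanSpace ℝ (Fin n) → EuclideanSpace ℝ (Fin n)} {x : EuclideanSpace ℝ (Fin n)}
    (hν : DifferentiableAt ℝ ν x) (hV : DifferentiableAt ℝ V x) :
    diverg (fun y => ν y • V y) x = ν x * diverg V x + ⟪gradient ν x, V x⟫ := by
  rw [diverg, diverg, fderiv_fun_smul hν hV]
  simp only [add_apply, smul_apply, ContinuousLinearMap.smulRight_apply, PiLp.add_apply,
    PiLp.smul_apply, smul_eq_mul, Finset.sum_add_distrib, Finset.mul_sum, PiLp.inner_apply]
  congr 1
  refine Finset.sum_congr rfl fun i _ => ?_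
  rw [← inner_gradient_left, EuclideanSpace.inner_single_right]
  simp [mul_comm]

theorem measurable_diverg (V : EuclideanSpace ℝ (Fin n) → EuclideanSpace ℝ (Fin n)) :
    Measurable (diverg V) :=
  Finset.measurable_sum _ fun i _ =>
    (measurable_pi_apply i).comp ((PiLp.continuous_ofLp 2 _).measurable.comp
      (measurable_fderiv_apply_const ℝ V _))

theorem abs_diverg_le (V : EuclideanSpace ℝ (Fin n) → EuclideanSpace ℝ (Fin n))
    (x : EuclideanSpace ℝ (Fin n)) : |diverg V x| ≤ n * ‖fderiv ℝ V x‖ := by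
  calc |diverg V x| ≤ ∑ i, |fderiv ℝ V x (EuclideanSpace.single i (1 : ℝ)) i| :=
        Finset.abs_sum_le_sum_abs _ _
    _ ≤ ∑ i, ‖fderiv ℝ V x (EuclideanSpace.single i (1 : ℝ))‖ :=
        Finset.sum_le_sum fun i _ =>
          (Real.norm_eq_abs _).symm.trans_le (PiLp.norm_apply_le _ i)
    _ ≤ ∑ _i : Fin n, ‖fderiv ℝ V x‖ := by
        gcongr with i
        simpa [PiLp.norm_single] using (fderiv ℝ V x).le_opNorm (EuclideanSpace.single i 1)
    _ = n * ‖fderiv ℝ V x‖ := by simp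

theorem abs_diverg_gradient_le {f : EuclideanSpace ℝ (Fin n) → ℝ} {L : ℝ} (hL : 0 ≤ L)
    (hlip : ∀ x y, ‖gradient f x - gradient f y‖ ≤ L * ‖x - y‖)
    (x : EuclideanSpace ℝ (Fin n)) :
    |diverg (gradient f) x| ≤ n * L :=
  (abs_diverg_le _ x).trans <| by
    gcongr
    exact norm_fderiv_le_of_lip' ℝ hL (Filter.Eventually.of_forall fun y => hlip y x)

theorem integral_inner_gradient_eq_neg_integral_mul_diverg
    {ν : EuclideanSpace ℝ (Fin n) → ℝ} {V : EuclideanSpace ℝ (Fin n) → EuclideanSpace ℝ (Fin n)}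
    (hν : Differentiable ℝ ν) (hV : Differentiable ℝ V)
    (hdiv : ∫ x, diverg (fun y => ν y • V y) x = 0)
    (hνV : Integrable fun x => ν x * diverg V x)
    (hinner : Integrable fun x => ⟪gradient ν x, V x⟫) :
    ∫ x, ⟪gradient ν x, V x⟫ = -∫ x, ν x * diverg V x := by
  rw [integral_congr_ae (ae_of_all _ fun x => diverg_smul (hν x) (hV x)),
    integral_add hνV hinner] at hdiv
  linarith

theorem fisherInfo_exp_neg_div_eq {f ν : EuclideanSpace ℝ (Fin n) → ℝ} {Z : ℝ} (hZ : Z ≠ 0)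
    (hν : Differentiable ℝ ν) (hν0 : ∀ x, ν x ≠ 0)
    (hlog : Integrable fun x => ‖gradient (fun y => log (ν y)) x‖ ^ 2 * ν x)
    (hf : Integrable fun x => ‖gradient f x‖ ^ 2 * ν x)
    (hinner : Integrable fun x => ⟪gradient ν x, gradient f x⟫) :
    fisherInfo ν (fun x => exp (-f x) / Z)
      = (∫ x, ‖gradient (fun y => log (ν y)) x‖ ^ 2 * ν x)
        + 2 * (∫ x, ⟪gradient ν x, gradient f x⟫) + ∫ x, ‖gradient f x‖ ^ 2 * ν x := by
  have hpt : ∀ x, ‖gradient (fun y => log (ν y)) x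
        - gradient (fun y => log (exp (-f y) / Z)) x‖ ^ 2 * ν x
      = ‖gradient (fun y => log (ν y)) x‖ ^ 2 * ν x
        + 2 * ⟪gradient ν x, gradient f x⟫ + ‖gradient f x‖ ^ 2 * ν x := by
    intro x
    rw [gradient_log_exp_neg_div f hZ, Pi.neg_apply, sub_neg_eq_add, norm_add_sq_real,
      ← inner_gradient_log_mul_self (hν x) (hν0 x)]
    ring
  rw [fisherInfo, integral_congr_ae (ae_of_all _ hpt),
    integral_add (hlog.fun_add (hinner.const_mul 2)) hf,
    integral_add hlog (hinner.const_mul 2), integral_const_mul]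

end Divergence

theorem second_moment_bound_of_drift_general {n : ℕ}
    (f : EuclideanSpace ℝ (Fin n) → ℝ) (hf : ContDiff ℝ 2 f)
    (Lf : ℝ) (hLf : 0 < Lf)
    (hflip : ∀ x y, ‖gradient f x - gradient f y‖ ≤ Lf * ‖x - y‖)
    (Z : ℝ) (hZpos : 0 < Z)
    (piD : EuclideanSpace ℝ (Fin n) → ℝ)
    (hpiD : ∀ x, piD x = Real.exp (-(f x)) / Z)
    (ν : EuclideanSpace ℝ (Fin n) → ℝ)
    (hνpos : ∀ x, 0 < ν x) (hνC1 : ContDiff ℝ 1 ν)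
    (hνprob : (∫ x, ν x) = 1)
    (F : EuclideanSpace ℝ (Fin n) → EuclideanSpace ℝ (Fin n))
    (hint1 : Integrable (fun x => ‖gradient f x‖ ^ 2 * ν x))
    (hint2 : Integrable (fun x => ‖gradient (fun y => Real.log (ν y)) x‖ ^ 2 * ν x))
    (hint3 : Integrable (fun x => ‖F x - gradient f x‖ ^ 2 * ν x))
    (hdivthm : (∫ x, diverg (fun y => ν y • gradient f y) x) = 0) :
    (∫ x, ‖F x‖ ^ 2 * ν x)
      ≤ 2 * fisherInfo ν piD + 4 * n * Lf
        + 2 * ∫ x, ‖F x - gradient f x‖ ^ 2 * ν x := by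
  obtain rfl : piD = fun x => exp (-f x) / Z := funext hpiD
  have hν : Differentiable ℝ ν := hνC1.differentiable one_ne_zero
  have hΔ := abs_diverg_gradient_le hLf.le hflip
  have hνΔ : Integrable fun x => ν x * diverg (gradient f) x :=
    (Integrable.of_integral_ne_zero (by simp [hνprob])).mul_bdd
      (measurable_diverg _).aestronglyMeasurable
      (ae_of_all _ fun x => (Real.norm_eq_abs _).trans_le (hΔ x))
  have hmean : ∫ x, ν x * diverg (gradient f) x ≤ n * Lf :=
    integral_mul_le_of_integral_eq_one (fun x => (hνpos x).le) hνprob hνΔ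
      fun x => (le_abs_self _).trans (hΔ x)
  have hinner : Integrable fun x => ⟪gradient ν x, gradient f x⟫ :=
    .inner_gradient_of_norm_sq_mul hν hνpos (measurable_gradient f) hint2 hint1
  have hibp := integral_inner_gradient_eq_neg_integral_mul_diverg hν
    (hf.gradient.differentiable one_ne_zero) hdivthm hνΔ hinner
  have hFI := fisherInfo_exp_neg_div_eq hZpos.ne' hν (fun x => (hνpos x).ne') hint2 hint1 hinner
  have hlog_nonneg : 0 ≤ ∫ x, ‖gradient (fun y => log (ν y)) x‖ ^ 2 * ν x :=
    integral_nonneg fun x => mul_nonneg (sq_nonneg _) (hνpos x).le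
  calc ∫ x, ‖F x‖ ^ 2 * ν x
      ≤ 2 * (∫ x, ‖F x - gradient f x‖ ^ 2 * ν x) + 2 * ∫ x, ‖gradient f x‖ ^ 2 * ν x :=
        integral_norm_sq_mul_le (fun x => (hνpos x).le) hint3 hint1
    _ ≤ _ := by linarith

theorem second_moment_bound_of_drift {n : ℕ} (hn : 1 ≤ n)
    (f : EuclideanSpace ℝ (Fin n) → ℝ) (hf : ContDiff ℝ 2 f)
    (Lf : ℝ) (hLf : 0 < Lf)
    (hflip : ∀ x y, ‖gradient f x - gradient f y‖ ≤ Lf * ‖x - y‖)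
    (hexp_int : Integrable (fun x => Real.exp (-(f x))))
    (Z : ℝ) (hZ : Z = ∫ x, Real.exp (-(f x))) (hZpos : 0 < Z)
    (piD : EuclideanSpace ℝ (Fin n) → ℝ)
    (hpiD : ∀ x, piD x = Real.exp (-(f x)) / Z)
    (ν : EuclideanSpace ℝ (Fin n) → ℝ)
    (hνpos : ∀ x, 0 < ν x) (hνC1 : ContDiff ℝ 1 ν)
    (hνprob : (∫ x, ν x) = 1)
    (F : EuclideanSpace ℝ (Fin n) → EuclideanSpace ℝ (Fin n))
    (hF : Measurable F)
    (hint1 : Integrable (fun x => ‖gradient f x‖ ^ 2 * ν x))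
    (hint2 : Integrable (fun x => ‖gradient (fun y => Real.log (ν y)) x‖ ^ 2 * ν x))
    (hint3 : Integrable (fun x => ‖F x - gradient f x‖ ^ 2 * ν x))
    (hdivthm : (∫ x, diverg (fun y => ν y • gradient f y) x) = 0) :
    (∫ x, ‖F x‖ ^ 2 * ν x)
      ≤ 2 * fisherInfo ν piD + 4 * n * Lf
        + 2 * ∫ x, ‖F x - gradient f x‖ ^ 2 * ν x :=
  second_moment_bound_of_drift_general f hf Lf hLf hflip Z hZpos piD hpiD ν hνpos hνC1 hνprob F
    hint1 hint2 hint3 hdivthm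
end

section
/- Let n ≥ 1, let p : ℝⁿ → [0, ∞) be a measurable probability density (∫ p = 1), let σ > 0, and let p_σ(x) = ∫_{ℝⁿ} p(z) φ_σ(x − z) dz be the Gaussian-smoothed density. Then p_σ is differentiable at every x ∈ ℝⁿ, the integral ∫ (z − x) p(z) φ_σ(x − z) dz converges absolutely, and σ² ∇p_σ(x) = ∫_{ℝⁿ} (z − x) p(z) φ_σ(x − z) dz for all x. In particular, since p_σ(x) > 0 everywhere, Tweedie's formula holds: σ² ∇log p_σ(x) = (∫ z p(z) φ_σ(x − z) dz) / p_σ(x) − x. -/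
open MeasureTheory Real

/-- Density of the Gaussian `N(0, σ²I)` on `ℝⁿ`:
`φ_σ(u) = (2πσ²)^{−n/2} exp(−‖u‖²/(2σ²))`. -/
noncomputable def gaussDensity (n : ℕ) (σ : ℝ)
    (u : EuclideanSpace ℝ (Fin n)) : ℝ :=
  (2 * Real.pi * σ ^ 2) ^ (-(n : ℝ) / 2) * Real.exp (-‖u‖ ^ 2 / (2 * σ ^ 2))

/-!
Differentiate under the integral sign: `∇ₓ φ_σ(x - z) = σ⁻² φ_σ(x - z) (z - x)`, and since
`t exp(-t²/(2σ²)) ≤ σ` both `φ_σ` and this gradient are bounded uniformly in `x` and `z`, so the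
integrability of `p` provides the dominating function. Tweedie's formula is then the chain rule for
`log`, where `p_σ > 0` because `φ_σ > 0` and `∫ p > 0`.
-/

lemma mul_exp_neg_sq_div_le {σ : ℝ} (hσ : 0 < σ) (t : ℝ) :
    t * exp (-t ^ 2 / (2 * σ ^ 2)) ≤ σ := by
  have hlin : t ≤ σ * (t ^ 2 / (2 * σ ^ 2) + 1) := by
    rw [div_add_one (by positivity), mul_div_assoc', le_div_iff₀ (by positivity)]
    nlinarith [sq_nonneg (t - σ)]
  have hexp : t ≤ σ * exp (t ^ 2 / (2 * σ ^ 2)) :=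
    hlin.trans (by gcongr; exact add_one_le_exp _)
  rwa [neg_div, exp_neg, ← div_eq_mul_inv, div_le_iff₀ (exp_pos _)]

namespace gaussDensity

variable {n : ℕ} {σ : ℝ}

lemma nonneg (n : ℕ) (σ : ℝ) (u : EuclideanSpace ℝ (Fin n)) : 0 ≤ gaussDensity n σ u := by
  unfold gaussDensity
  positivity

lemma pos (hσ : σ ≠ 0) (u : EuclideanSpace ℝ (Fin n)) : 0 < gaussDensity n σ u := by
  unfold gaussDensity
  positivity

lemma le_const (n : ℕ) (σ : ℝ) (u : EuclideanSpace ℝ (Fin n)) :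
    gaussDensity n σ u ≤ (2 * π * σ ^ 2) ^ (-(n : ℝ) / 2) := by
  refine mul_le_of_le_one_right (by positivity) (exp_le_one_iff.mpr ?_)
  exact div_nonpos_of_nonpos_of_nonneg (neg_nonpos.mpr (sq_nonneg _)) (by positivity)

lemma norm_mul_le (hσ : 0 < σ) (u : EuclideanSpace ℝ (Fin n)) :
    ‖u‖ * gaussDensity n σ u ≤ (2 * π * σ ^ 2) ^ (-(n : ℝ) / 2) * σ := by
  rw [gaussDensity, mul_left_comm]
  gcongr
  exact mul_exp_neg_sq_div_le hσ ‖u‖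

@[fun_prop]
lemma continuous (n : ℕ) (σ : ℝ) : Continuous (gaussDensity n σ) := by
  unfold gaussDensity
  fun_prop

lemma hasGradientAt_sub (z x : EuclideanSpace ℝ (Fin n)) :
    HasGradientAt (fun y => gaussDensity n σ (y - z))
      (((σ ^ 2)⁻¹ * gaussDensity n σ (x - z)) • (z - x)) x := by
  set C := (2 * π * σ ^ 2) ^ (-(n : ℝ) / 2)
  have hsq : HasFDerivAt (fun y => ‖y - z‖ ^ 2) (2 • innerSL ℝ (x - z)) x := by
    simpa using ((hasFDerivAt_id x).sub_const z).norm_sq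
  have hprofile : HasDerivAt (fun t => C * exp (-t / (2 * σ ^ 2)))
      (C * (exp (-‖x - z‖ ^ 2 / (2 * σ ^ 2)) * (-1 / (2 * σ ^ 2)))) (‖x - z‖ ^ 2) := by
    simpa using (((hasDerivAt_id _).neg.div_const (2 * σ ^ 2)).exp).const_mul C
  rw [hasGradientAt_iff_hasFDerivAt]
  refine (hprofile.comp_hasFDerivAt x hsq).congr_fderiv ?_
  ext v
  simp only [map_sub, smul_apply, sub_apply, coe_innerSL_apply, nsmul_eq_mul, Nat.cast_ofNat,
    smul_eq_mul, gaussDensity, map_smul, InnerProductSpace.toDual_apply_apply, C]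
  ring

lemma norm_smul_sub_le (hσ : 0 < σ) (a : ℝ) (y z : EuclideanSpace ℝ (Fin n)) :
    ‖(a * gaussDensity n σ (y - z)) • (z - y)‖ ≤ (2 * π * σ ^ 2) ^ (-(n : ℝ) / 2) * σ * ‖a‖ := by
  calc ‖(a * gaussDensity n σ (y - z)) • (z - y)‖ = ‖a‖ * (‖y - z‖ * gaussDensity n σ (y - z)) := by
        rw [norm_smul, norm_mul, norm_of_nonneg (nonneg n σ _), norm_sub_rev]
        ring
    _ ≤ ‖a‖ * ((2 * π * σ ^ 2) ^ (-(n : ℝ) / 2) * σ) :=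
        mul_le_mul_of_nonneg_left (norm_mul_le hσ _) (norm_nonneg a)
    _ = (2 * π * σ ^ 2) ^ (-(n : ℝ) / 2) * σ * ‖a‖ := mul_comm _ _

end gaussDensity

theorem HasGradientAt.log {E : Type*} [NormedAddCommGroup E] [InnerProductSpace ℝ E]
    [CompleteSpace E] {f : E → ℝ} {f' x : E} (hf : HasGradientAt f f' x) (hx : f x ≠ 0) :
    HasGradientAt (fun y => log (f y)) ((f x)⁻¹ • f') x := by
  rw [hasGradientAt_iff_hasFDerivAt, map_smul]
  exact hf.hasFDerivAt.log hx

lemma integral_smul_eq_integral_smul_sub_add {α E : Type*} [MeasurableSpace α] {μ : Measure α}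
    [NormedAddCommGroup E] [NormedSpace ℝ E] [CompleteSpace E] {w : α → ℝ} {f : α → E} {c : E}
    (hw : Integrable w μ) (hwf : Integrable (fun a => w a • (f a - c)) μ) :
    ∫ a, w a • f a ∂μ = ∫ a, w a • (f a - c) ∂μ + (∫ a, w a ∂μ) • c := by
  calc ∫ a, w a • f a ∂μ = ∫ a, (w a • (f a - c) + w a • c) ∂μ := by
        simp_rw [← smul_add, sub_add_cancel]
    _ = ∫ a, w a • (f a - c) ∂μ + (∫ a, w a ∂μ) • c := by
        rw [integral_add hwf (hw.smul_const c), integral_smul_const]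

section Smoothing

variable {n : ℕ} {σ : ℝ} {p : EuclideanSpace ℝ (Fin n) → ℝ}

lemma MeasureTheory.Integrable.mul_gaussDensity_sub (hp : Integrable p)
    (x : EuclideanSpace ℝ (Fin n)) : Integrable (fun z => p z * gaussDensity n σ (x - z)) :=
  hp.mul_bdd (by fun_prop) (ae_of_all _ fun z => by
    rw [norm_of_nonneg (gaussDensity.nonneg n σ _)]
    exact gaussDensity.le_const n σ _)

lemma integral_mul_gaussDensity_sub_pos (hσ : σ ≠ 0) (hp0 : 0 ≤ p) (hp : Integrable p)
    (hp_pos : 0 < ∫ z, p z) (x : EuclideanSpace ℝ (Fin n)) :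
    0 < ∫ z, p z * gaussDensity n σ (x - z) := by
  have hsupport : Function.support (fun z => p z * gaussDensity n σ (x - z)) = Function.support p :=
    Function.support_mul_of_ne_zero_right p fun z => (gaussDensity.pos hσ _).ne'
  rw [integral_pos_iff_support_of_nonneg (fun z => mul_nonneg (hp0 z) (gaussDensity.nonneg n σ _))
    (hp.mul_gaussDensity_sub x), hsupport]
  exact (integral_pos_iff_support_of_nonneg hp0 hp).mp hp_pos

lemma MeasureTheory.Integrable.mul_gaussDensity_sub_smul_sub (hσ : 0 < σ) (hp : Integrable p)
    (x : EuclideanSpace ℝ (Fin n)) :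
    Integrable (fun z => (p z * gaussDensity n σ (x - z)) • (z - x)) :=
  (hp.norm.const_mul _).mono' ((hp.aestronglyMeasurable.mul (by fun_prop)).smul (by fun_prop))
    (ae_of_all _ fun z => gaussDensity.norm_smul_sub_le hσ (p z) x z)

theorem hasGradientAt_integral_mul_gaussDensity_sub (hσ : 0 < σ) (hp : Integrable p)
    (x : EuclideanSpace ℝ (Fin n)) :
    HasGradientAt (fun y => ∫ z, p z * gaussDensity n σ (y - z))
      ((σ ^ 2)⁻¹ • ∫ z, (p z * gaussDensity n σ (x - z)) • (z - x)) x := by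
  have hF' : ∀ z y, HasFDerivAt (fun y => p z * gaussDensity n σ (y - z))
      (innerSL ℝ ((σ ^ 2)⁻¹ • (p z * gaussDensity n σ (y - z)) • (z - y))) y := fun z y => by
    refine ((gaussDensity.hasGradientAt_sub z y).hasFDerivAt.const_mul (p z)).congr_fderiv ?_
    ext v
    simp only [map_smul, map_sub, smul_apply, sub_apply, InnerProductSpace.toDual_apply_apply,
      smul_eq_mul, coe_innerSL_apply]
    ring
  have hderiv := hasFDerivAt_integral_of_dominated_of_fderiv_le Filter.univ_mem
    (Filter.Eventually.of_forall fun y => (hp.mul_gaussDensity_sub y).aestronglyMeasurable)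
    (hp.mul_gaussDensity_sub x)
    ((innerSL ℝ).continuous.comp_aestronglyMeasurable
      ((hp.mul_gaussDensity_sub_smul_sub hσ x).fun_smul _).aestronglyMeasurable)
    (bound := fun z => (σ ^ 2)⁻¹ * ((2 * π * σ ^ 2) ^ (-(n : ℝ) / 2) * σ * ‖p z‖))
    (ae_of_all _ fun z y _ => by
      rw [innerSL_apply_norm, norm_smul, norm_of_nonneg (by positivity)]
      gcongr
      exact gaussDensity.norm_smul_sub_le hσ (p z) y z)
    ((hp.norm.const_mul _).const_mul _) (ae_of_all _ fun z y _ => hF' z y)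
  have hint : Integrable fun z => (σ ^ 2)⁻¹ • (p z * gaussDensity n σ (x - z)) • (z - x) :=
    (hp.mul_gaussDensity_sub_smul_sub hσ x).fun_smul _
  rw [ContinuousLinearMap.integral_comp_comm _ hint, integral_smul] at hderiv
  exact hasGradientAt_iff_hasFDerivAt.mpr hderiv

end Smoothing

theorem tweedie_formula_general {n : ℕ}
    (p : EuclideanSpace ℝ (Fin n) → ℝ)
    (hp0 : ∀ z, 0 ≤ p z) (hp1 : (∫ z, p z) = 1)
    (σ : ℝ) (hσ : 0 < σ)
    (pσ : EuclideanSpace ℝ (Fin n) → ℝ)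
    (hpσ : ∀ x, pσ x = ∫ z, p z * gaussDensity n σ (x - z)) :
    ∀ x : EuclideanSpace ℝ (Fin n),
      DifferentiableAt ℝ pσ x ∧
      Integrable (fun z => (p z * gaussDensity n σ (x - z)) • (z - x)) ∧
      σ ^ 2 • gradient pσ x = ∫ z, (p z * gaussDensity n σ (x - z)) • (z - x) ∧
      0 < pσ x ∧
      σ ^ 2 • gradient (fun y => Real.log (pσ y)) x
        = (pσ x)⁻¹ • (∫ z, (p z * gaussDensity n σ (x - z)) • z) - x := by
  intro x
  obtain rfl : pσ = fun y => ∫ z, p z * gaussDensity n σ (y - z) := funext hpσ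
  have hp_int : Integrable p := .of_integral_ne_zero (by simp [hp1])
  have hgrad := hasGradientAt_integral_mul_gaussDensity_sub hσ hp_int x
  have hpos := integral_mul_gaussDensity_sub_pos hσ.ne' hp0 hp_int (by simp [hp1]) x
  have hweighted := hp_int.mul_gaussDensity_sub_smul_sub hσ x
  refine ⟨hgrad.differentiableAt, hweighted, ?_, hpos, ?_⟩
  · rw [hgrad.gradient, smul_inv_smul₀ (pow_ne_zero 2 hσ.ne')]
  · rw [(hgrad.log hpos.ne').gradient,
      integral_smul_eq_integral_smul_sub_add (hp_int.mul_gaussDensity_sub x) hweighted]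
    match_scalars <;> field_simp
    ring

theorem tweedie_formula {n : ℕ} (hn : 1 ≤ n)
    (p : EuclideanSpace ℝ (Fin n) → ℝ) (hp : Measurable p)
    (hp0 : ∀ z, 0 ≤ p z) (hp1 : (∫ z, p z) = 1)
    (σ : ℝ) (hσ : 0 < σ)
    (pσ : EuclideanSpace ℝ (Fin n) → ℝ)
    (hpσ : ∀ x, pσ x = ∫ z, p z * gaussDensity n σ (x - z)) :
    ∀ x : EuclideanSpace ℝ (Fin n),
      DifferentiableAt ℝ pσ x ∧
      Integrable (fun z => (p z * gaussDensity n σ (x - z)) • (z - x)) ∧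
      σ ^ 2 • gradient pσ x = ∫ z, (p z * gaussDensity n σ (x - z)) • (z - x) ∧
      0 < pσ x ∧
      σ ^ 2 • gradient (fun y => Real.log (pσ y)) x
        = (pσ x)⁻¹ • (∫ z, (p z * gaussDensity n σ (x - z)) • z) - x :=
  tweedie_formula_general p hp0 hp1 σ hσ pσ hpσ
end
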